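/- arXiv:2602.11557 — 2 statements merged into one kernel-verified Lean document; each statement's English description precedes it below -/
import Mathlib

section
/- Suppose ‖x_i‖_1 ≤ R for all i ∈ {1,…,n}, where R > 0. Then for every W ∈ ℝ^{k×d}, the entry-wise 1-norm of the loss gradient is sandwiched by the proxy function: γ · G(W) ≤ ‖D(W)‖_1 ≤ 2R · G(W), where γ = sup{ min_{i ∈ {1,…,n}, c ≠ y_i} (e_{y_i} − e_c)ᵀ W' x_i : W' ∈ ℝ^{k×d}, ‖W'‖_max ≤ 1 }. -/
open Finset Filter

/-- Softmax map on `ℝ^k`. -/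
noncomputable def softmax {k : ℕ} (z : Fin k → ℝ) (c : Fin k) : ℝ :=
  Real.exp (z c) / ∑ j, Real.exp (z j)

/-- Logits `W x` of a linear classifier `W : ℝ^{k×d}` on input `x : ℝ^d`. -/
noncomputable def logits {k d : ℕ} (W : Fin k → Fin d → ℝ) (x : Fin d → ℝ) : Fin k → ℝ :=
  fun c => ∑ j, W c j * x j

/-- Cross-entropy loss `L(W) = -(1/n) ∑ᵢ log S_{yᵢ}(W xᵢ)`. -/
noncomputable def lossCE {n k d : ℕ} (x : Fin n → Fin d → ℝ) (y : Fin n → Fin k)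
    (W : Fin k → Fin d → ℝ) : ℝ :=
  -((1 : ℝ) / n) * ∑ i, Real.log (softmax (logits W (x i)) (y i))

/-- Proxy function `G(W) = (1/n) ∑ᵢ (1 - S_{yᵢ}(W xᵢ))`. -/
noncomputable def proxyG {n k d : ℕ} (x : Fin n → Fin d → ℝ) (y : Fin n → Fin k)
    (W : Fin k → Fin d → ℝ) : ℝ :=
  ((1 : ℝ) / n) * ∑ i, (1 - softmax (logits W (x i)) (y i))

/-- Per-sample gradient matrix `gᵢ(W) = (S(W xᵢ) - e_{yᵢ}) xᵢᵀ`. -/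
noncomputable def sampleGrad {k d : ℕ} (x : Fin d → ℝ) (y : Fin k)
    (W : Fin k → Fin d → ℝ) : Fin k → Fin d → ℝ :=
  fun c j => (softmax (logits W x) c - (if c = y then 1 else 0)) * x j

/-- Full gradient matrix `D(W) = (1/n) ∑ᵢ gᵢ(W)`. -/
noncomputable def gradCE {n k d : ℕ} (x : Fin n → Fin d → ℝ) (y : Fin n → Fin k)
    (W : Fin k → Fin d → ℝ) : Fin k → Fin d → ℝ :=
  fun c j => ((1 : ℝ) / n) * ∑ i, sampleGrad (x i) (y i) W c j

/-- Entry-wise 1-norm of a matrix. -/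
noncomputable def norm1M {k d : ℕ} (A : Fin k → Fin d → ℝ) : ℝ :=
  ∑ c, ∑ j, |A c j|

/-- 1-norm of a vector. -/
noncomputable def norm1V {d : ℕ} (v : Fin d → ℝ) : ℝ := ∑ j, |v j|

/-- `min_{c ≠ y} (e_y - e_c)ᵀ A x`. -/
noncomputable def marginMin {k d : ℕ} (hk : 2 ≤ k) (A : Fin k → Fin d → ℝ)
    (x : Fin d → ℝ) (y : Fin k) : ℝ :=
  (Finset.univ.erase y).inf'
    (by
      obtain ⟨cne, hcne⟩ := Fintype.exists_ne_of_one_lt_card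
        (by simpa using (by omega : 1 < k)) y
      exact ⟨cne, Finset.mem_erase.mpr ⟨hcne, Finset.mem_univ _⟩⟩)
    (fun c => logits A x y - logits A x c)

/-- `min_{i ∈ [n], c ≠ yᵢ} (e_{yᵢ} - e_c)ᵀ W xᵢ`. -/
noncomputable def dataMargin {n k d : ℕ} (hn : 1 ≤ n) (hk : 2 ≤ k)
    (x : Fin n → Fin d → ℝ) (y : Fin n → Fin k) (W : Fin k → Fin d → ℝ) : ℝ :=
  Finset.univ.inf' ⟨⟨0, by omega⟩, Finset.mem_univ _⟩
    (fun i => marginMin hk W (x i) (y i))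

/-- Max margin `γ` over the max-norm unit ball. -/
noncomputable def gammaMax {n k d : ℕ} (hn : 1 ≤ n) (hk : 2 ≤ k)
    (x : Fin n → Fin d → ℝ) (y : Fin n → Fin k) : ℝ :=
  sSup { g : ℝ | ∃ W' : Fin k → Fin d → ℝ, ‖W'‖ ≤ 1 ∧ g = dataMargin hn hk x y W' }

/-- Mini-batch gradient `(1/b) ∑_{i ∈ B} gᵢ(W)`. -/
noncomputable def batchGrad {n k d : ℕ} (x : Fin n → Fin d → ℝ) (y : Fin n → Fin k)
    (B : Finset (Fin n)) (b : ℕ) (W : Fin k → Fin d → ℝ) : Fin k → Fin d → ℝ :=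
  fun c j => ((1 : ℝ) / b) * ∑ i ∈ B, sampleGrad (x i) (y i) W c j

/-- Frobenius norm of a matrix. -/
noncomputable def frobNorm {k d : ℕ} (A : Fin k → Fin d → ℝ) : ℝ :=
  Real.sqrt (∑ c, ∑ j, (A c j) ^ 2)

/-!
For the upper bound, each per-sample gradient is the rank-one matrix `(S(W xᵢ) - e_{yᵢ}) xᵢᵀ`,
whose entry-wise 1-norm is `‖S - e_y‖₁ ‖xᵢ‖₁ = 2 (1 - S_y) ‖xᵢ‖₁`; the triangle inequality
finishes. For the lower bound, pair `D(W)` with any `W'` in the max-norm unit ball. By Hölder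
the pairing is at most `‖D(W)‖₁` in absolute value, and it equals
`-(1/n) ∑ᵢ ∑_{c ≠ yᵢ} S_c (v_{yᵢ} - v_c)` with `v = W' xᵢ`. Each difference `v_{yᵢ} - v_c` is
at least the margin of `W'` and `∑_{c ≠ yᵢ} S_c = 1 - S_{yᵢ}`, so the pairing is at most
`-margin(W') · G(W)`. Taking the supremum over `W'` gives `γ G(W) ≤ ‖D(W)‖₁`.
-/

section Softmax

variable {k : ℕ}

lemma softmax_nonneg (z : Fin k → ℝ) (c : Fin k) : 0 ≤ softmax z c := by
  unfold softmax; positivity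

lemma sum_softmax (z : Fin k → ℝ) (c₀ : Fin k) : ∑ c, softmax z c = 1 := by
  have hpos : 0 < ∑ j, Real.exp (z j) := sum_pos (fun j _ => Real.exp_pos _) ⟨c₀, mem_univ c₀⟩
  simp only [softmax, ← sum_div, div_self hpos.ne']

lemma softmax_le_one (z : Fin k → ℝ) (c : Fin k) : softmax z c ≤ 1 :=
  sum_softmax z c ▸ single_le_sum (fun j _ => softmax_nonneg z j) (mem_univ c)

lemma sum_erase_softmax (z : Fin k → ℝ) (y : Fin k) :
    ∑ c ∈ univ.erase y, softmax z c = 1 - softmax z y := by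
  rw [← sum_softmax z y, ← add_sum_erase univ _ (mem_univ y), add_sub_cancel_left]

lemma sum_abs_softmax_sub_single (z : Fin k → ℝ) (y : Fin k) :
    ∑ c, |softmax z c - (if c = y then 1 else 0)| = 2 * (1 - softmax z y) := by
  have hy : |softmax z y - 1| = 1 - softmax z y := by
    rw [abs_sub_comm, abs_of_nonneg (sub_nonneg.mpr (softmax_le_one z y))]
  have hne : ∑ c ∈ univ.erase y, |softmax z c - (if c = y then 1 else 0)| =
      ∑ c ∈ univ.erase y, softmax z c :=
    sum_congr rfl fun c hc => by
      rw [if_neg (ne_of_mem_erase hc), sub_zero, abs_of_nonneg (softmax_nonneg z c)]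
  rw [← add_sum_erase univ _ (mem_univ y), if_pos rfl, hy, hne, sum_erase_softmax]
  ring

end Softmax

lemma mul_one_sub_le_sub_sum_mul {ι : Type*} [Fintype ι] [DecidableEq ι] {q v : ι → ℝ}
    (hq : ∀ c, 0 ≤ q c) (hq1 : ∑ c, q c = 1) {y : ι} {m : ℝ}
    (hm : ∀ c, c ≠ y → m ≤ v y - v c) :
    m * (1 - q y) ≤ v y - ∑ c, q c * v c := by
  have hcompl : ∑ c ∈ univ.erase y, q c = 1 - q y := by
    rw [← hq1, ← add_sum_erase univ _ (mem_univ y), add_sub_cancel_left]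
  have hgap : v y - ∑ c, q c * v c = ∑ c ∈ univ.erase y, q c * (v y - v c) := by
    rw [← add_sum_erase univ (fun c => q c * v c) (mem_univ y)]
    simp only [mul_sub, sum_sub_distrib, ← sum_mul, hcompl]
    ring
  calc m * (1 - q y) = ∑ c ∈ univ.erase y, q c * m := by rw [← sum_mul, hcompl, mul_comm]
    _ ≤ ∑ c ∈ univ.erase y, q c * (v y - v c) :=
      sum_le_sum fun c hc => mul_le_mul_of_nonneg_left (hm c (ne_of_mem_erase hc)) (hq c)
    _ = v y - ∑ c, q c * v c := hgap.symm

section EntrywiseNorm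

variable {k d : ℕ}

lemma norm1M_nonneg (A : Fin k → Fin d → ℝ) : 0 ≤ norm1M A := by
  unfold norm1M; positivity

lemma abs_sum_mul_le_norm1M (A B : Fin k → Fin d → ℝ) (hB : ∀ c j, |B c j| ≤ 1) :
    |∑ c, ∑ j, A c j * B c j| ≤ norm1M A :=
  calc |∑ c, ∑ j, A c j * B c j| ≤ ∑ c, |∑ j, A c j * B c j| := abs_sum_le_sum_abs _ _
    _ ≤ ∑ c, ∑ j, |A c j * B c j| := sum_le_sum fun c _ => abs_sum_le_sum_abs _ _
    _ ≤ norm1M A := sum_le_sum fun c _ => sum_le_sum fun j _ => by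
        rw [abs_mul]; exact mul_le_of_le_one_right (abs_nonneg _) (hB c j)

lemma norm1M_smul_sum_le {ι : Type*} (s : Finset ι) {a : ℝ} (ha : 0 ≤ a)
    (f : ι → Fin k → Fin d → ℝ) :
    norm1M (fun c j => a * ∑ i ∈ s, f i c j) ≤ a * ∑ i ∈ s, norm1M (f i) :=
  calc norm1M (fun c j => a * ∑ i ∈ s, f i c j) = ∑ c, ∑ j, a * |∑ i ∈ s, f i c j| := by
        simp only [norm1M, abs_mul, abs_of_nonneg ha]
    _ ≤ ∑ c, ∑ j, a * ∑ i ∈ s, |f i c j| := by gcongr; exact abs_sum_le_sum_abs _ _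
    _ = a * ∑ i ∈ s, norm1M (f i) := by
        simp only [norm1M, mul_sum]
        exact (sum_congr rfl fun _ _ => sum_comm).trans sum_comm

lemma abs_apply_apply_le_norm (W : Fin k → Fin d → ℝ) (c : Fin k) (j : Fin d) :
    |W c j| ≤ ‖W‖ :=
  (norm_le_pi_norm (W c) j).trans (norm_le_pi_norm W c)

end EntrywiseNorm

section Gradient

variable {n k d : ℕ}

lemma norm1M_sampleGrad (x : Fin d → ℝ) (y : Fin k) (W : Fin k → Fin d → ℝ) :
    norm1M (sampleGrad x y W) = 2 * (1 - softmax (logits W x) y) * norm1V x := by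
  simp only [norm1M, norm1V, sampleGrad, abs_mul, ← sum_abs_softmax_sub_single _ y, sum_mul_sum]

lemma sum_sampleGrad_mul (x : Fin d → ℝ) (y : Fin k) (W W' : Fin k → Fin d → ℝ) :
    ∑ c, ∑ j, sampleGrad x y W c j * W' c j =
      -(logits W' x y - ∑ c, softmax (logits W x) c * logits W' x c) :=
  calc ∑ c, ∑ j, sampleGrad x y W c j * W' c j =
        ∑ c, (softmax (logits W x) c - (if c = y then 1 else 0)) * logits W' x c := by
        simp only [sampleGrad, logits, mul_sum]
        exact sum_congr rfl fun c _ => sum_congr rfl fun j _ => by ring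
    _ = _ := by
        simp only [sub_mul, sum_sub_distrib, ite_mul, one_mul, zero_mul, sum_ite_eq', mem_univ,
          if_true, neg_sub]

lemma sum_gradCE_mul (x : Fin n → Fin d → ℝ) (y : Fin n → Fin k) (W B : Fin k → Fin d → ℝ) :
    ∑ c, ∑ j, gradCE x y W c j * B c j =
      (1 / n : ℝ) * ∑ i, ∑ c, ∑ j, sampleGrad (x i) (y i) W c j * B c j := by
  simp only [gradCE, mul_sum, sum_mul, mul_assoc]
  exact (sum_congr rfl fun _ _ => sum_comm).trans sum_comm

end Gradient

section Margin

variable {n k d : ℕ} (hn : 1 ≤ n) (hk : 2 ≤ k) (x : Fin n → Fin d → ℝ) (y : Fin n → Fin k)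

lemma dataMargin_le (W' : Fin k → Fin d → ℝ) (i : Fin n) {c : Fin k} (hc : c ≠ y i) :
    dataMargin hn hk x y W' ≤ logits W' (x i) (y i) - logits W' (x i) c :=
  (inf'_le _ (mem_univ i)).trans (inf'_le _ (mem_erase.mpr ⟨hc, mem_univ c⟩))

lemma dataMargin_mul_proxyG_le (W W' : Fin k → Fin d → ℝ) (hW' : ‖W'‖ ≤ 1) :
    dataMargin hn hk x y W' * proxyG x y W ≤ norm1M (gradCE x y W) := by
  set S := fun i => softmax (logits W (x i))
  calc dataMargin hn hk x y W' * proxyG x y W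
      = (1 / n : ℝ) * ∑ i, dataMargin hn hk x y W' * (1 - S i (y i)) := by
        simp only [proxyG, mul_sum]
        exact sum_congr rfl fun i _ => by ring
    _ ≤ (1 / n : ℝ) * ∑ i, (logits W' (x i) (y i) - ∑ c, S i c * logits W' (x i) c) := by
        gcongr with i
        exact mul_one_sub_le_sub_sum_mul (softmax_nonneg _) (sum_softmax _ (y i))
          fun c hc => dataMargin_le hn hk x y W' i hc
    _ = -∑ c, ∑ j, gradCE x y W c j * W' c j := by
        simp only [sum_gradCE_mul, sum_sampleGrad_mul, sum_neg_distrib, mul_neg, neg_neg, S]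
    _ ≤ norm1M (gradCE x y W) :=
      (neg_le_abs _).trans <| abs_sum_mul_le_norm1M _ _ fun c j =>
        (abs_apply_apply_le_norm W' c j).trans hW'

end Margin

lemma Real.sSup_mul_le {S : Set ℝ} {t N : ℝ} (ht : 0 ≤ t) (hN : 0 ≤ N)
    (h : ∀ s ∈ S, s * t ≤ N) : sSup S * t ≤ N := by
  rcases ht.eq_or_lt with rfl | ht
  · simpa using hN
  · exact (le_div_iff₀ ht).mp <|
      Real.sSup_le (fun s hs => (le_div_iff₀ ht).mpr (h s hs)) (div_nonneg hN ht.le)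

section Proxy

variable {n k d : ℕ} (x : Fin n → Fin d → ℝ) (y : Fin n → Fin k) (W : Fin k → Fin d → ℝ)

lemma proxyG_nonneg : 0 ≤ proxyG x y W :=
  mul_nonneg (by positivity) (sum_nonneg fun i _ => sub_nonneg.mpr (softmax_le_one _ _))

lemma norm1M_gradCE_le {R : ℝ} (hx : ∀ i, norm1V (x i) ≤ R) :
    norm1M (gradCE x y W) ≤ 2 * R * proxyG x y W :=
  calc norm1M (gradCE x y W) ≤ (1 / n : ℝ) * ∑ i, norm1M (sampleGrad (x i) (y i) W) :=
        norm1M_smul_sum_le univ (by positivity) _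
    _ = (1 / n : ℝ) * ∑ i, 2 * (1 - softmax (logits W (x i)) (y i)) * norm1V (x i) := by
        simp only [norm1M_sampleGrad]
    _ ≤ (1 / n : ℝ) * ∑ i, 2 * (1 - softmax (logits W (x i)) (y i)) * R := by
        gcongr with i
        · linarith [softmax_le_one (logits W (x i)) (y i)]
        · exact hx i
    _ = 2 * R * proxyG x y W := by
        simp only [proxyG, mul_sum]
        exact sum_congr rfl fun i _ => by ring

end Proxy

theorem grad_norm1_sandwich_general (n k d : ℕ) (hn : 1 ≤ n) (hk : 2 ≤ k)
    (x : Fin n → Fin d → ℝ) (y : Fin n → Fin k)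
    (R : ℝ) (hx : ∀ i, norm1V (x i) ≤ R)
    (W : Fin k → Fin d → ℝ) :
    gammaMax hn hk x y * proxyG x y W ≤ norm1M (gradCE x y W)
    ∧ norm1M (gradCE x y W) ≤ 2 * R * proxyG x y W := by
  refine ⟨Real.sSup_mul_le (proxyG_nonneg x y W) (norm1M_nonneg _) ?_, norm1M_gradCE_le x y W hx⟩
  rintro _ ⟨W', hW', rfl⟩
  exact dataMargin_mul_proxyG_le hn hk x y W W' hW'

/-- `γ·G(W) ≤ ‖D(W)‖₁ ≤ 2R·G(W)` under the data bound `‖xᵢ‖₁ ≤ R`. -/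
theorem grad_norm1_sandwich (n k d : ℕ) (hn : 1 ≤ n) (hk : 2 ≤ k) (hd : 1 ≤ d)
    (x : Fin n → Fin d → ℝ) (y : Fin n → Fin k)
    (R : ℝ) (hR : 0 < R) (hx : ∀ i, norm1V (x i) ≤ R)
    (W : Fin k → Fin d → ℝ) :
    gammaMax hn hk x y * proxyG x y W ≤ norm1M (gradCE x y W)
    ∧ norm1M (gradCE x y W) ≤ 2 * R * proxyG x y W :=
  grad_norm1_sandwich_general n k d hn hk x y R hx W
end

section
/- Suppose ‖x_i‖_1 ≤ R for all i ∈ {1,…,n}, where R > 0. Then for all W, W' ∈ ℝ^{k×d}, the proxy function is stable: G(W') ≤ exp(2R ‖W' − W‖_max) · G(W). -/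
open Finset Filter

/- The logits of `W'` and `W` at `x` differ entrywise by at most `‖W' - W‖ · ‖x‖₁ ≤ R ‖W' - W‖`.
Since `1 - S_y(z) = ∑_{c ≠ y} exp z_c / ∑_c exp z_c`, a uniform perturbation of `z` by at most `a`
changes the numerator by a factor at most `exp a` and the denominator by a factor at least
`exp (-a)`, hence `1 - S_y` by a factor at most `exp (2a)`; averaging over the samples gives the
bound for `G`. -/

lemma one_sub_softmax_eq {k : ℕ} (z : Fin k → ℝ) (y : Fin k) :
    1 - softmax z y = (∑ c ∈ univ.erase y, Real.exp (z c)) / ∑ c, Real.exp (z c) := by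
  have hpos : 0 < ∑ c, Real.exp (z c) := sum_pos (fun c _ => Real.exp_pos _) ⟨y, mem_univ _⟩
  rw [softmax, ← sum_erase_add _ _ (mem_univ y)]
  field_simp
  ring

lemma sum_exp_le_exp_mul_sum_exp {ι : Type*} (s : Finset ι) {z z' : ι → ℝ} {a : ℝ}
    (h : ∀ c ∈ s, z' c ≤ z c + a) :
    ∑ c ∈ s, Real.exp (z' c) ≤ Real.exp a * ∑ c ∈ s, Real.exp (z c) := by
  rw [mul_sum]
  refine sum_le_sum fun c hc => ?_
  rw [← Real.exp_add]
  exact Real.exp_le_exp.mpr (by linarith [h c hc])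

lemma one_sub_softmax_le_exp_mul {k : ℕ} {z z' : Fin k → ℝ} {a : ℝ}
    (h : ∀ c, |z' c - z c| ≤ a) (y : Fin k) :
    1 - softmax z' y ≤ Real.exp (2 * a) * (1 - softmax z y) := by
  have hpos : 0 < ∑ c, Real.exp (z c) := sum_pos (fun c _ => Real.exp_pos _) ⟨y, mem_univ _⟩
  have hpos' : 0 < ∑ c, Real.exp (z' c) := sum_pos (fun c _ => Real.exp_pos _) ⟨y, mem_univ _⟩
  have hnum : ∑ c ∈ univ.erase y, Real.exp (z' c) ≤ Real.exp a * ∑ c ∈ univ.erase y, Real.exp (z c) :=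
    sum_exp_le_exp_mul_sum_exp _ fun c _ => by linarith [(abs_le.mp (h c)).2]
  have hden : ∑ c, Real.exp (z c) ≤ Real.exp a * ∑ c, Real.exp (z' c) :=
    sum_exp_le_exp_mul_sum_exp _ fun c _ => by linarith [(abs_le.mp (h c)).1]
  rw [one_sub_softmax_eq, one_sub_softmax_eq, div_le_iff₀ hpos', mul_div_assoc', div_mul_eq_mul_div,
    le_div_iff₀ hpos, two_mul, Real.exp_add]
  calc (∑ c ∈ univ.erase y, Real.exp (z' c)) * ∑ c, Real.exp (z c)
      ≤ (Real.exp a * ∑ c ∈ univ.erase y, Real.exp (z c)) * (Real.exp a * ∑ c, Real.exp (z' c)) :=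
        mul_le_mul hnum hden hpos.le (by positivity)
    _ = _ := by ring

lemma abs_logits_sub_le {k d : ℕ} (W W' : Fin k → Fin d → ℝ) (x : Fin d → ℝ) (c : Fin k) :
    |logits W' x c - logits W x c| ≤ ‖W' - W‖ * norm1V x := by
  have hentry : ∀ j, |W' c j - W c j| ≤ ‖W' - W‖ := fun j => by
    simpa [Real.norm_eq_abs] using (norm_le_pi_norm ((W' - W) c) j).trans (norm_le_pi_norm _ c)
  calc |logits W' x c - logits W x c| = |∑ j, (W' c j - W c j) * x j| := by
        simp only [logits, ← sum_sub_distrib, sub_mul]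
    _ ≤ ∑ j, |W' c j - W c j| * |x j| := by
        simpa only [abs_mul] using abs_sum_le_sum_abs (fun j => (W' c j - W c j) * x j) univ
    _ ≤ ∑ j, ‖W' - W‖ * |x j| :=
        sum_le_sum fun j _ => mul_le_mul_of_nonneg_right (hentry j) (abs_nonneg _)
    _ = ‖W' - W‖ * norm1V x := by rw [norm1V, mul_sum]

theorem proxy_stability_general (n k d : ℕ)
    (x : Fin n → Fin d → ℝ) (y : Fin n → Fin k)
    (R : ℝ) (hx : ∀ i, norm1V (x i) ≤ R)
    (W W' : Fin k → Fin d → ℝ) :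
    proxyG x y W' ≤ Real.exp (2 * R * ‖W' - W‖) * proxyG x y W := by
  have hsample : ∀ i, 1 - softmax (logits W' (x i)) (y i)
      ≤ Real.exp (2 * R * ‖W' - W‖) * (1 - softmax (logits W (x i)) (y i)) := fun i => by
    have hlogits : ∀ c, |logits W' (x i) c - logits W (x i) c| ≤ R * ‖W' - W‖ := fun c =>
      (abs_logits_sub_le W W' (x i) c).trans <| by
        rw [mul_comm R]; exact mul_le_mul_of_nonneg_left (hx i) (norm_nonneg _)
    simpa only [mul_assoc] using one_sub_softmax_le_exp_mul hlogits (y i)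
  calc proxyG x y W'
      ≤ (1 / n) * ∑ i, Real.exp (2 * R * ‖W' - W‖) * (1 - softmax (logits W (x i)) (y i)) :=
        mul_le_mul_of_nonneg_left (sum_le_sum fun i _ => hsample i) (by positivity)
    _ = Real.exp (2 * R * ‖W' - W‖) * proxyG x y W := by
        rw [proxyG, ← mul_sum]; ring

/-- stability of the proxy function,
`G(W') ≤ exp(2R ‖W' − W‖_max) · G(W)`. -/
theorem proxy_stability (n k d : ℕ) (hn : 1 ≤ n) (hk : 2 ≤ k) (hd : 1 ≤ d)
    (x : Fin n → Fin d → ℝ) (y : Fin n → Fin k)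
    (R : ℝ) (hR : 0 < R) (hx : ∀ i, norm1V (x i) ≤ R)
    (W W' : Fin k → Fin d → ℝ) :
    proxyG x y W' ≤ Real.exp (2 * R * ‖W' - W‖) * proxyG x y W :=
  proxy_stability_general n k d x y R hx W W'
end
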